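/- In U(gl(2|1))[[t]] the deformed Cartan elements satisfy: [H₁, H₂] = −(1/4)(T − T')² H₁, [H₁, H₃] = (1/4)(T − T')² H₁, and [H₂, H₃] = 0. -/

import Mathlib

noncomputable section

namespace SuperJordanian

open scoped BigOperators

/-- The generalized binomial coefficient `C(1/2, n)`. -/
def cHalf (n : ℕ) : ℂ :=
  (∏ i ∈ Finset.range n, ((1 : ℂ) / 2 - (i : ℂ))) / (n.factorial : ℂ)

/-- Parity for `gl(2|1)`: `p(i,j) = 1` iff exactly one of `i`, `j` equals the third index. -/
def par (i j : Fin 3) : ℕ :=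
  if (i = 2 ∧ j ≠ 2) ∨ (i ≠ 2 ∧ j = 2) then 1 else 0

/-- The generator `e_{ij}` in the free algebra. -/
def gen (i j : Fin 3) : FreeAlgebra ℂ (Fin 3 × Fin 3) := FreeAlgebra.ι ℂ (i, j)

/-- Defining relations of the enveloping algebra `U(gl(2|1))`:
`e_{ij} e_{kl} - (-1)^{p(i,j)p(k,l)} e_{kl} e_{ij}
  = δ_{jk} e_{il} - (-1)^{p(i,j)p(k,l)} δ_{li} e_{kj}`. -/
inductive Rel : FreeAlgebra ℂ (Fin 3 × Fin 3) → FreeAlgebra ℂ (Fin 3 × Fin 3) → Prop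
  | mk (i j k l : Fin 3) :
      Rel (gen i j * gen k l - ((-1 : ℂ) ^ (par i j * par k l)) • (gen k l * gen i j))
        ((if j = k then gen i l else 0)
          - ((-1 : ℂ) ^ (par i j * par k l)) • (if l = i then gen k j else 0))

/-- The enveloping algebra `U = U(gl(2|1))`. -/
abbrev U : Type := RingQuot Rel

/-- The image of `e_{ij}` in `U`. -/
def e (i j : Fin 3) : U := RingQuot.mkAlgHom ℂ Rel (gen i j)

/-- The formal power series ring `U[[t]]`. -/
abbrev V : Type := PowerSeries U

/-- The central formal variable `t`. -/
def tv : V := PowerSeries.X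

/-- The inclusion `U → U[[t]]` as constant power series. -/
def C : U →+* V := PowerSeries.C

def e₁ : U := e 0 1
def f₁ : U := e 1 0
def h₁ : U := e 0 0 - e 1 1
def e₂ : U := e 1 2
def f₂ : U := e 2 1
def h₂ : U := e 1 1 + e 2 2
def e₃ : U := e 0 2
def f₃ : U := e 2 0
def h₃ : U := h₁ + h₂

/-- `s = Σ_{n ≥ 0} C(1/2, n) t^{2n} e₁^{2n}`, so that `s² = 1 + t² e₁²`. -/
def s : V := PowerSeries.mk fun m => if m % 2 = 0 then cHalf (m / 2) • (e₁ ^ m) else 0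

def T : V := tv * C e₁ + s
def T' : V := -(tv * C e₁) + s
def H₁ : V := s * C h₁
def F₁ : V := C f₁ - ((1 : ℂ) / 4) • (tv ^ 2 * C (e₁ * (h₁ ^ 2 - 1)))
def H₂ : V := C h₂ - ((1 : ℂ) / 2) • (tv ^ 2 * C (e₁ ^ 2 * h₁))
def E₂ : V := C e₂ - ((1 : ℂ) / 4) • (tv ^ 2 * C (e₁ * e₃ * (2 * h₁ + 1)))
def F₂ : V := C f₂
def H₃ : V := C h₃ + ((1 : ℂ) / 2) • (tv ^ 2 * C (e₁ ^ 2 * h₁))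
def E₃ : V := C e₃
def F₃ : V := C f₃ + ((1 : ℂ) / 4) • (tv ^ 2 * C (e₁ * f₂ * (2 * h₁ + 1)))

/-- Commutator `[a, b] = ab - ba`. -/
def br (a b : V) : V := a * b - b * a

/-- Anticommutator `{a, b} = ab + ba`. -/
def ac (a b : V) : V := a * b + b * a

/-!
Let `ϑ = t d/dt` be the Euler operator and `A = t² e₁² = ¼ (T − T')²`. Since `[h₁, e₁] = 2 e₁` and
`[h₂, e₁] = −e₁`, every series `f(t e₁)` satisfies `[h₁, f] = 2 ϑf` and `[h₂, f] = −ϑf`. The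
binomial series `s = √(1 + A)` solves `(1 + A) ϑs = A s`, and with this the commutator
`[s h₁, h₂ − ½ A h₁]` collapses to `−A s h₁`. The element `h₁ + 2 h₂ = H₂ + H₃` commutes with `e₁`,
`h₁` and `h₂`, hence with `H₁` and `H₂`, which gives the other two relations.
-/

open scoped PowerSeries
open PowerSeries (X coeff mk)

section Rescale

variable {k A : Type*} [CommSemiring k] [Semiring A] [Algebra k A]

/-- `X d/dX`. -/
def eulerOp (f : k⟦X⟧) : k⟦X⟧ := mk fun n => (n : k) * coeff n f

/-- `f ↦ f(a X)`. -/
def rescaleOf (a : A) : k⟦X⟧ →ₐ[k] A⟦X⟧ :=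
  AlgHom.mk'
    { toFun f := mk fun n => coeff n f • a ^ n
      map_one' := by
        ext n
        simp only [PowerSeries.coeff_mk, PowerSeries.coeff_one]
        split_ifs with h <;> simp [h]
      map_mul' f g := by
        ext n
        simp only [PowerSeries.coeff_mk, PowerSeries.coeff_mul, Finset.sum_smul]
        refine Finset.sum_congr rfl fun p hp => ?_
        rw [smul_mul_smul_comm, ← pow_add, Finset.HasAntidiagonal.mem_antidiagonal.mp hp]
      map_zero' := by ext n; simp
      map_add' f g := by ext n; simp [add_smul] }
    fun c f => by ext n; simp [smul_smul]

theorem coeff_rescaleOf (a : A) (f : k⟦X⟧) (n : ℕ) :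
    coeff n (rescaleOf a f) = coeff n f • a ^ n := by
  simp [rescaleOf]

theorem eulerOp_X_pow (m : ℕ) : eulerOp (X ^ m : k⟦X⟧) = (m : k) • X ^ m := by
  ext n
  simp only [eulerOp, PowerSeries.coeff_mk, PowerSeries.coeff_X_pow, PowerSeries.coeff_smul]
  split_ifs with h <;> simp [h]

theorem mul_pow_of_mul_eq {u a : A} {c : k} (h : u * a = a * u + c • a) (n : ℕ) :
    u * a ^ n = a ^ n * u + (n * c) • a ^ n := by
  induction n with
  | zero => simp
  | succ n ih =>
    rw [pow_succ, ← mul_assoc, ih, add_mul, mul_assoc, h, mul_add, smul_mul_assoc, mul_smul_comm,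
      ← mul_assoc, ← pow_succ, add_assoc, ← add_smul]
    push_cast
    ring_nf

theorem C_mul_rescaleOf {u a : A} {c : k} (h : u * a = a * u + c • a) (f : k⟦X⟧) :
    PowerSeries.C u * rescaleOf a f
      = rescaleOf a f * PowerSeries.C u + c • rescaleOf a (eulerOp f) := by
  ext n
  simp only [PowerSeries.coeff_C_mul, PowerSeries.coeff_mul_C, map_add, PowerSeries.coeff_smul,
    coeff_rescaleOf, eulerOp, PowerSeries.coeff_mk, mul_smul_comm, mul_pow_of_mul_eq h,
    smul_mul_assoc, smul_add, smul_smul]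
  ring_nf

end Rescale

theorem succ_mul_cHalf_succ (k : ℕ) : ((k : ℂ) + 1) * cHalf (k + 1) = (1 / 2 - k) * cHalf k := by
  have : (k.factorial : ℂ) ≠ 0 := Nat.cast_ne_zero.mpr k.factorial_ne_zero
  rw [cHalf, cHalf, Finset.prod_range_succ, Nat.factorial_succ]
  push_cast
  field_simp

def sqrtOneAddSq : ℂ⟦X⟧ := mk fun m => if m % 2 = 0 then cHalf (m / 2) else 0

theorem one_add_X_sq_mul_eulerOp_sqrtOneAddSq :
    (1 + X ^ 2) * eulerOp sqrtOneAddSq = X ^ 2 * sqrtOneAddSq := by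
  ext n
  rw [add_mul, one_mul, map_add, PowerSeries.coeff_X_pow_mul', PowerSeries.coeff_X_pow_mul']
  rcases lt_or_ge n 2 with hn | hn
  · interval_cases n <;> simp [eulerOp, sqrtOneAddSq]
  · obtain ⟨m, rfl⟩ := Nat.exists_eq_add_of_le' hn
    simp only [if_pos hn, Nat.add_sub_cancel, eulerOp, sqrtOneAddSq, PowerSeries.coeff_mk]
    rcases Nat.even_or_odd' m with ⟨j, rfl | rfl⟩
    · simp only [show (2 * j + 2) % 2 = 0 by omega, show (2 * j) % 2 = 0 by omega, if_true,
        show (2 * j + 2) / 2 = j + 1 by omega, show 2 * j / 2 = j by omega]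
      push_cast
      linear_combination 2 * succ_mul_cHalf_succ j
    · simp only [show (2 * j + 1 + 2) % 2 = 1 by omega, show (2 * j + 1) % 2 = 1 by omega]
      simp

theorem commutator_deformed_cartan {k R : Type*} [Field k] [CharZero k] [Ring R] [Algebra k R]
    {S N A x y : R} (hxy : x * y = y * x) (hyS : y * S = S * y - N)
    (hxS : x * S = S * x + (2 : k) • N) (hxA : x * A = A * x + (4 : k) • A)
    (hAS : A * S = S * A) (hN : N + A * N = S * A) :
    S * x * (y - (1 / 2 : k) • (A * x)) - (y - (1 / 2 : k) • (A * x)) * (S * x)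
      = -(A * (S * x)) := by
  linear_combination (norm := (simp only [mul_add, add_mul, mul_sub, sub_mul, mul_assoc,
      smul_mul_assoc, mul_smul_comm]; module))
    S * hxy - hyS * x - (1 / 2 : k) • (S * hxA * x) + (1 / 2 : k) • (A * hxS * x)
      + (1 / 2 : k) • (hAS * x * x) + hAS * x + hN * x

theorem e_mul_e_sub_e_mul_e (i j k l : Fin 3) (h : par i j * par k l = 0) :
    e i j * e k l - e k l * e i j
      = (if j = k then e i l else 0) - (if l = i then e k j else 0) := by
  simpa [e, h, apply_ite (RingQuot.mkAlgHom ℂ Rel)] using RingQuot.mkAlgHom_rel ℂ (Rel.mk i j k l)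

theorem h₁_mul_e₁ : h₁ * e₁ = e₁ * h₁ + (2 : ℂ) • e₁ := by
  have h00 := e_mul_e_sub_e_mul_e 0 0 0 1 (by decide)
  have h11 := e_mul_e_sub_e_mul_e 1 1 0 1 (by decide)
  simp only [if_true, if_false, Fin.reduceEq] at h00 h11
  simp only [h₁, e₁]
  linear_combination (norm := (simp only [sub_mul, mul_sub]; module)) h00 - h11

theorem h₂_mul_e₁ : h₂ * e₁ = e₁ * h₂ + (-1 : ℂ) • e₁ := by
  have h11 := e_mul_e_sub_e_mul_e 1 1 0 1 (by decide)
  have h22 := e_mul_e_sub_e_mul_e 2 2 0 1 (by decide)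
  simp only [if_true, if_false, Fin.reduceEq] at h11 h22
  simp only [h₂, e₁]
  linear_combination (norm := (simp only [add_mul, mul_add]; module)) h11 + h22

theorem commute_h₁_h₂ : Commute h₁ h₂ := by
  show h₁ * h₂ = h₂ * h₁
  have h01 := e_mul_e_sub_e_mul_e 0 0 1 1 (by decide)
  have h02 := e_mul_e_sub_e_mul_e 0 0 2 2 (by decide)
  have h12 := e_mul_e_sub_e_mul_e 1 1 2 2 (by decide)
  simp only [if_false, Fin.reduceEq] at h01 h02 h12
  simp only [h₁, h₂]
  linear_combination (norm := (simp only [add_mul, mul_add, sub_mul, mul_sub]; module))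
    h01 + h02 - h12

theorem commute_h₁_add_two_mul_h₂_e₁ : Commute (h₁ + 2 * h₂) e₁ := by
  show (h₁ + 2 * h₂) * e₁ = e₁ * (h₁ + 2 * h₂)
  rw [two_mul, add_mul, add_mul, mul_add, mul_add, h₁_mul_e₁, h₂_mul_e₁]
  module

/-- `f ↦ f(t e₁)`. -/
abbrev evalTE₁ : ℂ⟦X⟧ →ₐ[ℂ] V := rescaleOf e₁

theorem s_eq_evalTE₁ : s = evalTE₁ sqrtOneAddSq := by
  ext n
  rw [s, coeff_rescaleOf, sqrtOneAddSq, PowerSeries.coeff_mk, PowerSeries.coeff_mk]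
  split_ifs <;> simp

theorem tv_mul_C_e₁ : tv * C e₁ = evalTE₁ X := by
  ext n
  simp only [coeff_rescaleOf, C, PowerSeries.coeff_mul_C, tv, PowerSeries.coeff_X]
  split_ifs with h <;> simp [h]

theorem tv_sq_mul_C_e₁_sq_mul (u : U) : tv ^ 2 * C (e₁ ^ 2 * u) = evalTE₁ (X ^ 2) * C u := by
  have : (tv * C e₁) ^ 2 = tv ^ 2 * C e₁ ^ 2 := (PowerSeries.commute_X (C e₁)).symm.mul_pow 2
  rw [map_pow, ← tv_mul_C_e₁, this, map_mul, map_pow, mul_assoc]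

theorem quarter_smul_sub_sq : ((1 : ℂ) / 4) • (T - T') ^ 2 = evalTE₁ (X ^ 2) := by
  have : T - T' = (2 : ℂ) • evalTE₁ X := by
    rw [T, T', tv_mul_C_e₁, two_smul]
    abel
  rw [this, smul_pow, smul_smul, map_pow]
  norm_num

theorem C_h₁_mul_evalTE₁ (f : ℂ⟦X⟧) :
    C h₁ * evalTE₁ f = evalTE₁ f * C h₁ + (2 : ℂ) • evalTE₁ (eulerOp f) :=
  C_mul_rescaleOf h₁_mul_e₁ f

theorem C_h₂_mul_evalTE₁ (f : ℂ⟦X⟧) :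
    C h₂ * evalTE₁ f = evalTE₁ f * C h₂ - evalTE₁ (eulerOp f) := by
  rw [C, C_mul_rescaleOf h₂_mul_e₁, neg_one_smul, sub_eq_add_neg]

theorem br_H₁_H₂ : br H₁ H₂ = -(evalTE₁ (X ^ 2) * H₁) := by
  have hxA : C h₁ * evalTE₁ (X ^ 2) = evalTE₁ (X ^ 2) * C h₁ + (4 : ℂ) • evalTE₁ (X ^ 2) := by
    rw [C_h₁_mul_evalTE₁, eulerOp_X_pow, map_smul, smul_smul]
    norm_num
  have hAS : evalTE₁ (X ^ 2) * evalTE₁ sqrtOneAddSq = evalTE₁ sqrtOneAddSq * evalTE₁ (X ^ 2) := by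
    rw [← map_mul, ← map_mul, mul_comm]
  have hN := congrArg evalTE₁ one_add_X_sq_mul_eulerOp_sqrtOneAddSq
  rw [map_mul, map_mul, map_add, map_one, add_mul, one_mul, hAS] at hN
  rw [br, H₁, H₂, s_eq_evalTE₁, tv_sq_mul_C_e₁_sq_mul]
  exact commutator_deformed_cartan (commute_h₁_h₂.map C).eq
    (C_h₂_mul_evalTE₁ _) (C_h₁_mul_evalTE₁ _) hxA hAS hN

theorem commute_h₁_add_two_mul_h₂_h₁ : Commute (h₁ + 2 * h₂) h₁ :=
  (Commute.refl h₁).add_left ((Commute.ofNat_left 2 h₁).mul_left commute_h₁_h₂.symm)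

theorem commute_h₁_add_two_mul_h₂_h₂ : Commute (h₁ + 2 * h₂) h₂ :=
  commute_h₁_h₂.add_left ((Commute.ofNat_left 2 h₂).mul_left (Commute.refl h₂))

theorem commute_C_h₁_add_two_mul_h₂_evalTE₁ (f : ℂ⟦X⟧) :
    Commute (C (h₁ + 2 * h₂)) (evalTE₁ f) := by
  have h : (h₁ + 2 * h₂) * e₁ = e₁ * (h₁ + 2 * h₂) + (0 : ℂ) • e₁ := by
    rw [zero_smul, add_zero, commute_h₁_add_two_mul_h₂_e₁.eq]
  have hf := C_mul_rescaleOf h f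
  rw [zero_smul, add_zero] at hf
  exact hf

theorem commute_C_h₁_add_two_mul_h₂_H₁ : Commute (C (h₁ + 2 * h₂)) H₁ := by
  rw [H₁, s_eq_evalTE₁]
  exact (commute_C_h₁_add_two_mul_h₂_evalTE₁ _).mul_right (commute_h₁_add_two_mul_h₂_h₁.map C)

theorem commute_C_h₁_add_two_mul_h₂_H₂ : Commute (C (h₁ + 2 * h₂)) H₂ := by
  rw [H₂, tv_sq_mul_C_e₁_sq_mul]
  exact (commute_h₁_add_two_mul_h₂_h₂.map C).sub_right
    (((commute_C_h₁_add_two_mul_h₂_evalTE₁ _).mul_right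
      (commute_h₁_add_two_mul_h₂_h₁.map C)).smul_right _)

theorem H₂_add_H₃ : H₂ + H₃ = C (h₁ + 2 * h₂) := by
  rw [H₂, H₃, h₃, two_mul, map_add, map_add, map_add]
  abel

/-- commutators of the deformed Cartan elements in `U(gl(2|1))[[t]]`. -/
theorem statement1 :
    br H₁ H₂ = -(((1 : ℂ) / 4) • ((T - T') ^ 2 * H₁)) ∧
    br H₁ H₃ = ((1 : ℂ) / 4) • ((T - T') ^ 2 * H₁) ∧
    br H₂ H₃ = 0 := by
  have hA : ((1 : ℂ) / 4) • ((T - T') ^ 2 * H₁) = evalTE₁ (X ^ 2) * H₁ := by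
    rw [← smul_mul_assoc, quarter_smul_sub_sq]
  have hH₃ : H₃ = C (h₁ + 2 * h₂) - H₂ := eq_sub_of_add_eq' H₂_add_H₃
  refine ⟨by rw [hA, br_H₁_H₂], ?_, ?_⟩
  · rw [hA, hH₃, br, mul_sub, sub_mul, commute_C_h₁_add_two_mul_h₂_H₁.eq,
      ← neg_neg (evalTE₁ (X ^ 2) * H₁), ← br_H₁_H₂, br]
    abel
  · rw [hH₃, br, mul_sub, sub_mul, commute_C_h₁_add_two_mul_h₂_H₂.eq]
    abel

end SuperJordanian
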